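/- Assume n ≥ 2, M_{{1}} ≤ M_{{2}}, and min_{x∈Δ_m} u^L(x,2) < M_{{1}}. Then the set {x ∈ Δ_m : u^L(x,2) ≥ M_{{1,2}}} is nonempty and max{ u^L(x,1) : x ∈ Δ_m, u^L(x,2) ≥ M_{{1,2}} } = M_{{1,2}}; moreover max{ u^L(x,2) : x ∈ Δ_m, u^L(x,2) ≤ M_{{1,2}} } = M_{{1,2}}, and there exists x ∈ Δ_m with u^L(x,2) < M_{{1,2}}. -/

import Mathlib

open scoped Classical
open Finset

noncomputable section

/-- The leader's mixed-strategy simplex Δ_m. -/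
def simplex (m : ℕ) : Set (Fin m → ℝ) := stdSimplex ℝ (Fin m)

/-- Linear extension of a payoff matrix to mixed strategies: u(x,j) = ∑ i, x i * u i j. -/
def pay {m n : ℕ} (u : Fin m → Fin n → ℝ) (x : Fin m → ℝ) (j : Fin n) : ℝ :=
  ∑ i, x i * u i j

/-- Inner product on ℝ^m. -/
def dot {m : ℕ} (a x : Fin m → ℝ) : ℝ := ∑ i, a i * x i

/-- min_{j ∈ S} u(x, j). -/
def minOnS {m n : ℕ} (u : Fin m → Fin n → ℝ) (S : Set (Fin n)) (x : Fin m → ℝ) : ℝ :=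
  sInf ((fun j => pay u x j) '' S)

/-- The leader's maximin value M_S = max_{x∈Δ_m} min_{j∈S} u(x,j). -/
def Mval {m n : ℕ} (u : Fin m → Fin n → ℝ) (S : Set (Fin n)) : ℝ :=
  sSup (minOnS u S '' simplex m)

/-- The set 𝓜_S of maximin strategies. -/
def argMM {m n : ℕ} (u : Fin m → Fin n → ℝ) (S : Set (Fin n)) : Set (Fin m → ℝ) :=
  {x ∈ simplex m | minOnS u S x = Mval u S}

/-- The follower's best-response set BR(x) = argmax_j uF(x,j). -/
def BR {m n : ℕ} (uF : Fin m → Fin n → ℝ) (x : Fin m → ℝ) : Set (Fin n) :=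
  {j | ∀ j', pay uF x j' ≤ pay uF x j}

/-- Strong Stackelberg equilibrium of the game (uL, uF). -/
def SSE {m n : ℕ} (uL uF : Fin m → Fin n → ℝ) (x : Fin m → ℝ) (j : Fin n) : Prop :=
  x ∈ simplex m ∧ j ∈ BR uF x ∧
    ∀ x' ∈ simplex m, ∀ j' ∈ BR uF x', pay uL x' j' ≤ pay uL x j

/-- (x, j) is inducible with respect to the leader payoff uL. -/
def Inducible {m n : ℕ} (uL : Fin m → Fin n → ℝ) (x : Fin m → ℝ) (j : Fin n) : Prop :=
  ∃ uF : Fin m → Fin n → ℝ, SSE uL uF x j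

/-- μ is a (maximin-)cover of S w.r.t. uL: max_{x∈𝓜_S} max_{j∈BR(x)} uL(x,j) < M_S. -/
def IsCover {m n : ℕ} (uL μ : Fin m → Fin n → ℝ) (S : Set (Fin n)) : Prop :=
  ∀ x ∈ argMM uL S, ∀ j ∈ BR μ x, pay uL x j < Mval uL S

/-- μ is a proper cover of S w.r.t. uL. -/
def IsProperCover {m n : ℕ} (uL μ : Fin m → Fin n → ℝ) (S : Set (Fin n)) : Prop :=
  IsCover uL μ S ∧ ∀ x ∈ simplex m, ∀ j ∈ S, j ∉ BR μ x

/-!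
Write f = u^L(·,1), g = u^L(·,2) and M = M_{1,2}. If g x ≥ M and f x > M at some x, move x
slightly towards a point z with g z ≥ f x (one exists since max g ≥ max f): by concavity f stays
above M while g rises above M, contradicting the definition of M. Hence f ≤ M wherever g ≥ M, with
equality at a maximin point. Applied at a maximizer of f this forces min g < M, and the
intermediate value theorem on a segment from a minimizer of g to a maximin point yields g = M.
-/

open Filter Topology

section
variable {E : Type*} [AddCommGroup E] [Module ℝ E] {K : Set E} {f g : E → ℝ}

theorem ConcaveOn.exists_lt_and_lt (hf : ConcaveOn ℝ K f) (hg : ConcaveOn ℝ K g)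
    {x z : E} (hx : x ∈ K) (hz : z ∈ K) {c : ℝ}
    (hfx : c < f x) (hgx : c ≤ g x) (hgz : c < g z) : ∃ w ∈ K, c < f w ∧ c < g w := by
  have hnear : ∀ᶠ t in 𝓝[>] (0 : ℝ), c < (1 - t) * f x + t * f z ∧ t ∈ Set.Ioo 0 1 := by
    have hlim : Tendsto (fun t : ℝ => (1 - t) * f x + t * f z) (𝓝[>] 0) (𝓝 (f x)) := by
      refine (Continuous.tendsto' ?_ 0 (f x) (by simp)).mono_left nhdsWithin_le_nhds
      fun_prop
    exact (hlim.eventually_const_lt hfx).and (Ioo_mem_nhdsGT one_pos)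
  obtain ⟨t, hft, ht0, ht1⟩ := hnear.exists
  refine ⟨(1 - t) • x + t • z, hf.1 hx hz (by linarith) ht0.le (by ring), ?_, ?_⟩
  · exact hft.trans_le (hf.2 hx hz (by linarith) ht0.le (by ring))
  · calc c < (1 - t) * g x + t * g z := by nlinarith
      _ ≤ g ((1 - t) • x + t • z) := hg.2 hx hz (by linarith) ht0.le (by ring)

theorem ConcaveOn.le_of_forall_min_le (hf : ConcaveOn ℝ K f) (hg : ConcaveOn ℝ K g) {c : ℝ}
    (hc : ∀ w ∈ K, min (f w) (g w) ≤ c) {z : E} (hz : z ∈ K) (hgz : c < g z)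
    {x : E} (hx : x ∈ K) (hgx : c ≤ g x) : f x ≤ c := by
  by_contra! hfx
  obtain ⟨w, hw, hfw, hgw⟩ := hf.exists_lt_and_lt hg hx hz hfx hgx hgz
  exact (lt_min hfw hgw).not_ge (hc w hw)

end

section
variable {E : Type*} [AddCommGroup E] [Module ℝ E] [TopologicalSpace E] [IsTopologicalAddGroup E]
  [ContinuousSMul ℝ E] {K : Set E} {f g : E → ℝ}

theorem ConcaveOn.reference_levels (hf : ConcaveOn ℝ K f) (hg : ConcaveOn ℝ K g)
    (hgc : ContinuousOn g K) {c : ℝ} (hc : IsGreatest ((fun w => min (f w) (g w)) '' K) c)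
    (hfg : ∀ x ∈ K, ∃ z ∈ K, f x ≤ g z) {y : E} (hy : y ∈ K) (hymin : IsMinOn g K y)
    (hgf : ∃ x ∈ K, g y < f x) :
    {x ∈ K | c ≤ g x}.Nonempty ∧ IsGreatest {v | ∃ x ∈ K, c ≤ g x ∧ v = f x} c ∧
      IsGreatest {v | ∃ x ∈ K, g x ≤ c ∧ v = g x} c ∧ ∃ x ∈ K, g x < c := by
  obtain ⟨⟨xs, hxs, hxs_eq⟩, hc_ub⟩ := hc
  have hmin_le : ∀ w ∈ K, min (f w) (g w) ≤ c := fun w hw => hc_ub ⟨w, hw, rfl⟩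
  have hf_le : ∀ x ∈ K, c ≤ g x → f x ≤ c := by
    intro x hx hgx
    by_contra! hfx
    obtain ⟨z, hz, hfz⟩ := hfg x hx
    exact (hf.le_of_forall_min_le hg hmin_le hz (hfx.trans_le hfz) hx hgx).not_gt hfx
  have hgxs : c ≤ g xs := hxs_eq ▸ min_le_right _ _
  have hfxs : f xs = c := le_antisymm (hf_le xs hxs hgxs) (hxs_eq ▸ min_le_left _ _)
  have hgy : g y < c := by
    obtain ⟨x, hx, hgfx⟩ := hgf
    by_contra! hcy
    exact (hf_le x hx (hcy.trans (hymin hx))).not_gt (hcy.trans_lt hgfx)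
  obtain ⟨w, hw, hgw⟩ := hf.1.isPreconnected.intermediate_value hy hxs hgc ⟨hgy.le, hgxs⟩
  refine ⟨⟨xs, hxs, hgxs⟩, ⟨⟨xs, hxs, hgxs, hfxs.symm⟩, ?_⟩,
    ⟨⟨w, hw, hgw.le, hgw.symm⟩, ?_⟩, ⟨y, hy, hgy⟩⟩
  · rintro v ⟨x, hx, hgx, rfl⟩
    exact hf_le x hx hgx
  · rintro v ⟨x, -, hgx, rfl⟩
    exact hgx

end

section
variable {m n : ℕ}

lemma continuous_pay (u : Fin m → Fin n → ℝ) (j : Fin n) :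
    Continuous fun x : Fin m → ℝ => pay u x j := by
  unfold pay
  fun_prop

lemma concaveOn_pay (u : Fin m → Fin n → ℝ) (j : Fin n) {s : Set (Fin m → ℝ)}
    (hs : Convex ℝ s) : ConcaveOn ℝ s fun x => pay u x j :=
  (LinearMap.proj j ∘ₗ Matrix.vecMulLinear u).concaveOn hs

lemma minOnS_singleton (u : Fin m → Fin n → ℝ) (j : Fin n) :
    minOnS u {j} = fun x => pay u x j := by
  funext x
  simp [minOnS]

lemma minOnS_pair (u : Fin m → Fin n → ℝ) (j1 j2 : Fin n) :
    minOnS u {j1, j2} = fun x => min (pay u x j1) (pay u x j2) := by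
  funext x
  simp [minOnS, Set.image_pair]

lemma simplex_nonempty (hm : 0 < m) : (simplex m).Nonempty :=
  ⟨Pi.single ⟨0, hm⟩ 1, single_mem_stdSimplex ℝ _⟩

end

theorem first_reference_levels_general {m n : ℕ} (hm : 0 < m)
    (uL : Fin m → Fin n → ℝ) (j1 j2 : Fin n)
    (hM : Mval uL {j1} ≤ Mval uL {j2})
    (hmin : sInf ((fun x => pay uL x j2) '' simplex m) < Mval uL {j1}) :
    ({x ∈ simplex m | Mval uL {j1, j2} ≤ pay uL x j2}).Nonempty ∧
    IsGreatest {v : ℝ | ∃ x ∈ simplex m, Mval uL {j1, j2} ≤ pay uL x j2 ∧ v = pay uL x j1}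
      (Mval uL {j1, j2}) ∧
    IsGreatest {v : ℝ | ∃ x ∈ simplex m, pay uL x j2 ≤ Mval uL {j1, j2} ∧ v = pay uL x j2}
      (Mval uL {j1, j2}) ∧
    (∃ x ∈ simplex m, pay uL x j2 < Mval uL {j1, j2}) := by
  have hK : IsCompact (simplex m) := isCompact_stdSimplex ℝ (Fin m)
  have hconv : Convex ℝ (simplex m) := convex_stdSimplex ℝ (Fin m)
  have hne := simplex_nonempty hm
  obtain ⟨x1, hx1, hM1, hf_le⟩ :=
    hK.exists_sSup_image_eq_and_ge hne (continuous_pay uL j1).continuousOn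
  obtain ⟨x2, hx2, hM2, -⟩ := hK.exists_sSup_image_eq_and_ge hne (continuous_pay uL j2).continuousOn
  obtain ⟨y, hy, hs, hg_ge⟩ := hK.exists_sInf_image_eq_and_le hne (continuous_pay uL j2).continuousOn
  have hc : IsGreatest ((fun x => min (pay uL x j1) (pay uL x j2)) '' simplex m)
      (Mval uL {j1, j2}) := by
    rw [Mval, minOnS_pair]
    exact (hK.image ((continuous_pay uL j1).min (continuous_pay uL j2))).isGreatest_sSup
      (hne.image _)
  simp only [Mval, minOnS_singleton] at hM hmin
  rw [hM1, hM2] at hM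
  rw [hM1, hs] at hmin
  exact (concaveOn_pay uL j1 hconv).reference_levels (concaveOn_pay uL j2 hconv)
    (continuous_pay uL j2).continuousOn hc (fun x hx => ⟨x2, hx2, (hf_le x hx).trans hM⟩) hy
    (isMinOn_iff.mpr hg_ge) ⟨x1, hx1, hmin⟩

/-- {x ∈ Δ_m : u^L(x,2) ≥ M_{1,2}} is nonempty and the maximum of u^L(·,1)
over it equals M_{1,2}; the maximum of u^L(·,2) over {x : u^L(x,2) ≤ M_{1,2}} also equals
M_{1,2}; and some x ∈ Δ_m has u^L(x,2) < M_{1,2}. (Actions 1, 2 are j1, j2.) -/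
theorem first_reference_levels {m n : ℕ} (hm : 0 < m)
    (uL : Fin m → Fin n → ℝ) (j1 j2 : Fin n) (hj : j1 ≠ j2)
    (hM : Mval uL {j1} ≤ Mval uL {j2})
    (hmin : sInf ((fun x => pay uL x j2) '' simplex m) < Mval uL {j1}) :
    ({x ∈ simplex m | Mval uL {j1, j2} ≤ pay uL x j2}).Nonempty ∧
    IsGreatest {v : ℝ | ∃ x ∈ simplex m, Mval uL {j1, j2} ≤ pay uL x j2 ∧ v = pay uL x j1}
      (Mval uL {j1, j2}) ∧
    IsGreatest {v : ℝ | ∃ x ∈ simplex m, pay uL x j2 ≤ Mval uL {j1, j2} ∧ v = pay uL x j2}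
      (Mval uL {j1, j2}) ∧
    (∃ x ∈ simplex m, pay uL x j2 < Mval uL {j1, j2}) :=
  first_reference_levels_general hm uL j1 j2 hM hmin
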